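/- Let (b, B, m, μ) be an admissible parameter set and assume K is regular. For u ∈ K let ψ(·,u) be the unique K-valued C¹-solution of ∂ψ/∂t = R(ψ), ψ(0,u) = u. Then: (a) for all u, v ∈ K with u ≤_K v and all t ≥ 0, ψ(t,u) ≤_K ψ(t,v); and (b) for all t ≥ 0 and u ∈ K, ‖ψ(t,u)‖ ≤ exp((‖B‖_{L(H)} + 2‖μ(K∖{0})‖) t) ‖u‖. -/

import Mathlib

open MeasureTheory Filter
open scoped RealInnerProductSpace Topology ENNReal

noncomputable section

def IsSelfDualCone {H : Type*} [NormedAddCommGroup H] [InnerProductSpace ℝ H]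
    (K : Set H) : Prop :=
  K = {x : H | ∀ y ∈ K, 0 ≤ ⟪x, y⟫}

def trunc {H : Type*} [NormedAddCommGroup H] [InnerProductSpace ℝ H] (ξ : H) : H :=
  if ‖ξ‖ ≤ 1 then ξ else 0

structure AdmissibleParams (H : Type*) [NormedAddCommGroup H] [InnerProductSpace ℝ H]
    [CompleteSpace H] [MeasurableSpace H] [BorelSpace H] (K : Set H) where
  b : H
  B : H →L[ℝ] H
  m : Measure H
  ν : H → Measure H
  muVec : Set H → H
  m_support : m ((K \ {0})ᶜ) = 0
  m_sq : IntegrableOn (fun ξ : H => ‖ξ‖ ^ 2) (K \ {0}) m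
  m_chi : ∀ h : H, IntegrableOn (fun ξ : H => |⟪trunc ξ, h⟫|) (K \ {0}) m
  m_Im : ∃ Im : H, ∀ h : H, ⟪Im, h⟫ = ∫ ξ in K \ {0}, ⟪trunc ξ, h⟫ ∂m
  b_drift : ∀ v ∈ K, 0 ≤ ⟪b, v⟫ - ∫ ξ in K \ {0}, ⟪trunc ξ, v⟫ ∂m
  ν_finite : ∀ x ∈ K, IsFiniteMeasure (ν x)
  ν_support : ∀ x ∈ K, ν x ((K \ {0})ᶜ) = 0
  ν_add : ∀ x ∈ K, ∀ y ∈ K, ν (x + y) = ν x + ν y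
  ν_smul : ∀ x ∈ K, ∀ c : ℝ, 0 ≤ c → ν (c • x) = ENNReal.ofReal c • ν x
  ν_int : ∀ u ∈ K, ∀ x ∈ K, ⟪u, x⟫ = 0 →
    IntegrableOn (fun ξ : H => ⟪trunc ξ, u⟫ / ‖ξ‖ ^ 2) (K \ {0}) (ν x)
  B_quasi : ∀ u ∈ K, ∀ x ∈ K, ⟪u, x⟫ = 0 →
    0 ≤ ⟪ContinuousLinearMap.adjoint B u, x⟫
      - ∫ ξ in K \ {0}, ⟪trunc ξ, u⟫ / ‖ξ‖ ^ 2 ∂(ν x)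
  muVec_mem : ∀ S : Set H, MeasurableSet S → muVec S ∈ K
  muVec_spec : ∀ S : Set H, MeasurableSet S → ∀ x ∈ K, ⟪muVec S, x⟫ = (ν x S).toReal

def IsRegularCone {H : Type*} [NormedAddCommGroup H] [InnerProductSpace ℝ H]
    (K : Set H) : Prop :=
  ∀ (y : H) (x : ℕ → H), y ∈ K → (∀ n, x n ∈ K) →
    (∀ n, x (n + 1) - x n ∈ K) → (∀ n, y - x n ∈ K) →
    ∃ l : H, Filter.Tendsto x Filter.atTop (nhds l)

/-!
Write `L = ‖B‖ + ‖μ(K∖{0})‖`. Pairing the jump integrand against the cone shows that `R` is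
quasi-monotone, `⟪R c - R d, n⟫ ≥ 0` whenever `c - d ∈ K`, `n ∈ K` and `⟪c - d, n⟫ = 0`, and
one-sided Lipschitz along the cone, `⟪R c - R (c + n), n⟫ ≥ -L‖n‖²` and `⟪R u, u⟫ ≤ L‖u‖²`.

For (a), let `w = ψ(·,v) - ψ(·,u)` and `φ = dist(w, K)²`. At each time the Moreau decomposition
`w = z - n` (`z, n ∈ K`, `z ⊥ n`, `z` the projection of `w` onto `K`) gives the function
`‖w(·) - z‖²`, which lies above `φ`, touches it at that time, and has derivative at most `2Lφ`
there by the two properties of `R`. A Gronwall argument with `φ(0) = 0` forces `φ = 0`, i.e.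
`w(t) ∈ K`. For (b), Gronwall applied to `‖ψ(·,u)‖²` gives `‖ψ(t,u)‖ ≤ e^{Lt}‖u‖`.
-/

namespace IsSelfDualCone

variable {H : Type*} [NormedAddCommGroup H] [InnerProductSpace ℝ H] {K : Set H}

theorem mem_iff (hK : IsSelfDualCone K) {x : H} : x ∈ K ↔ ∀ y ∈ K, 0 ≤ ⟪x, y⟫ :=
  Set.ext_iff.1 hK x

theorem inner_nonneg (hK : IsSelfDualCone K) {x y : H} (hx : x ∈ K) (hy : y ∈ K) :
    0 ≤ ⟪x, y⟫ :=
  hK.mem_iff.1 hx y hy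

theorem zero_mem (hK : IsSelfDualCone K) : (0 : H) ∈ K :=
  hK.mem_iff.2 fun y _ => by simp

theorem add_mem (hK : IsSelfDualCone K) {x y : H} (hx : x ∈ K) (hy : y ∈ K) : x + y ∈ K :=
  hK.mem_iff.2 fun z hz => by
    rw [inner_add_left]
    exact add_nonneg (hK.inner_nonneg hx hz) (hK.inner_nonneg hy hz)

theorem smul_mem (hK : IsSelfDualCone K) {c : ℝ} (hc : 0 ≤ c) {x : H} (hx : x ∈ K) :
    c • x ∈ K :=
  hK.mem_iff.2 fun z hz => by
    rw [real_inner_smul_left]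
    exact mul_nonneg hc (hK.inner_nonneg hx hz)

theorem convex (hK : IsSelfDualCone K) : Convex ℝ K := fun _ hx _ hy _ _ ha hb _ =>
  hK.add_mem (hK.smul_mem ha hx) (hK.smul_mem hb hy)

theorem isClosed (hK : IsSelfDualCone K) : IsClosed K := by
  rw [hK]
  simp only [Set.ofPred_forall]
  exact isClosed_iInter fun y => isClosed_iInter fun _ =>
    isClosed_le continuous_const (continuous_id.inner continuous_const)

theorem exists_moreau_decomposition [CompleteSpace H] (hK : IsSelfDualCone K) (w : H) :
    ∃ z ∈ K, z - w ∈ K ∧ ⟪z, z - w⟫ = 0 ∧ Metric.infDist w K = ‖w - z‖ := by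
  obtain ⟨z, hzK, hmin⟩ := exists_norm_eq_iInf_of_complete_convex ⟨0, hK.zero_mem⟩
    hK.isClosed.isComplete hK.convex w
  have hvar := (norm_eq_iInf_iff_real_inner_le_zero hK.convex hzK).1 hmin
  have hle : ⟪w - z, z⟫ ≤ 0 := by
    simpa [two_smul] using hvar ((2 : ℝ) • z) (hK.smul_mem zero_le_two hzK)
  have hge : 0 ≤ ⟪w - z, z⟫ := by simpa using hvar 0 hK.zero_mem
  have hzw : z - w = -(w - z) := (neg_sub w z).symm
  refine ⟨z, hzK, hK.mem_iff.2 fun y hy => ?_, ?_, ?_⟩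
  · have := hvar (z + y) (hK.add_mem hzK hy)
    rw [add_sub_cancel_left] at this
    rw [hzw, inner_neg_left]
    linarith
  · rw [hzw, inner_neg_right, real_inner_comm, le_antisymm hle hge, neg_zero]
  · rw [hmin, Metric.infDist_eq_iInf]
    exact iInf_congr fun y => dist_eq_norm w y

end IsSelfDualCone

theorem exp_neg_sub_one_add_le_sq {s : ℝ} (hs : 0 ≤ s) : Real.exp (-s) - 1 + s ≤ s ^ 2 := by
  rcases le_or_gt s 1 with h | h
  · have := (abs_le.1 (Real.abs_exp_sub_one_sub_id_le (x := -s)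
      (by rwa [abs_neg, abs_of_nonneg hs]))).2
    nlinarith
  · have : Real.exp (-s) ≤ 1 := Real.exp_le_one_iff.2 (by linarith)
    nlinarith

theorem exp_neg_sub_exp_neg_add_le {s t : ℝ} (hs : 0 ≤ s) (ht : 0 ≤ t) :
    Real.exp (-s) - Real.exp (-(s + t)) ≤ t := by
  have h1 : Real.exp (-s) ≤ 1 := Real.exp_le_one_iff.2 (by linarith)
  have h2 : -t + 1 ≤ Real.exp (-t) := Real.add_one_le_exp (-t)
  have h3 : Real.exp (-t) ≤ 1 := Real.exp_le_one_iff.2 (by linarith)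
  rw [neg_add, Real.exp_add]
  nlinarith [mul_nonneg (sub_nonneg.2 h1) (sub_nonneg.2 h3)]

section JumpKernel

variable {H : Type*} [NormedAddCommGroup H] [InnerProductSpace ℝ H]

def jumpKernel (u ξ : H) : ℝ :=
  (Real.exp (-⟪ξ, u⟫) - 1 + ⟪trunc ξ, u⟫) / ‖ξ‖ ^ 2

theorem trunc_of_norm_le {ξ : H} (h : ‖ξ‖ ≤ 1) : trunc ξ = ξ := if_pos h

theorem trunc_of_one_lt_norm {ξ : H} (h : 1 < ‖ξ‖) : trunc ξ = 0 := if_neg h.not_ge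

theorem neg_norm_le_jumpKernel (u ξ : H) : -‖u‖ ≤ jumpKernel u ξ := by
  rcases eq_or_ne ξ 0 with rfl | hξ
  · simp [jumpKernel]
  have hξ2 : 0 < ‖ξ‖ ^ 2 := by positivity
  have hexp := Real.add_one_le_exp (-⟪ξ, u⟫)
  rw [jumpKernel, le_div_iff₀ hξ2]
  rcases le_or_gt ‖ξ‖ 1 with h | h
  · rw [trunc_of_norm_le h]
    nlinarith [norm_nonneg u]
  · rw [trunc_of_one_lt_norm h, inner_zero_left, add_zero]
    nlinarith [real_inner_le_norm ξ u,
      mul_nonneg (norm_nonneg u) (by nlinarith : (0 : ℝ) ≤ ‖ξ‖ ^ 2 - ‖ξ‖)]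

theorem abs_jumpKernel_le {u ξ : H} (hξu : 0 ≤ ⟪ξ, u⟫) : |jumpKernel u ξ| ≤ 1 + ‖u‖ ^ 2 := by
  rcases eq_or_ne ξ 0 with rfl | hξ
  · simp [jumpKernel]
    positivity
  have hξ2 : 0 < ‖ξ‖ ^ 2 := by positivity
  rw [jumpKernel, abs_div, abs_of_pos hξ2, div_le_iff₀ hξ2]
  rcases le_or_gt ‖ξ‖ 1 with h | h
  · rw [trunc_of_norm_le h, abs_of_nonneg (by linarith [Real.add_one_le_exp (-⟪ξ, u⟫)])]
    nlinarith [exp_neg_sub_one_add_le_sq hξu, real_inner_le_norm ξ u, norm_nonneg ξ,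
      norm_nonneg u]
  · rw [trunc_of_one_lt_norm h, inner_zero_left, add_zero]
    have h1 : Real.exp (-⟪ξ, u⟫) ≤ 1 := Real.exp_le_one_iff.2 (by linarith)
    have h2 : |Real.exp (-⟪ξ, u⟫) - 1| ≤ 1 := by
      rw [abs_le]; constructor <;> linarith [Real.exp_pos (-⟪ξ, u⟫)]
    nlinarith [sq_nonneg ‖u‖]

theorem jumpKernel_sub_le {c d ξ : H} (hcd : ⟪ξ, d⟫ ≤ ⟪ξ, c⟫) :
    jumpKernel c ξ - jumpKernel d ξ ≤ ⟪trunc ξ, c - d⟫ / ‖ξ‖ ^ 2 := by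
  have hexp : Real.exp (-⟪ξ, c⟫) ≤ Real.exp (-⟪ξ, d⟫) := Real.exp_le_exp.2 (by linarith)
  rw [jumpKernel, jumpKernel, ← sub_div, inner_sub_right]
  exact div_le_div_of_nonneg_right (by linarith) (by positivity)

theorem jumpKernel_sub_jumpKernel_add_le {c n ξ : H} (hc : 0 ≤ ⟪ξ, c⟫) (hn : 0 ≤ ⟪ξ, n⟫) :
    jumpKernel c ξ - jumpKernel (c + n) ξ ≤ ‖n‖ := by
  rcases eq_or_ne ξ 0 with rfl | hξ
  · simp [jumpKernel]
  have hξ2 : 0 < ‖ξ‖ ^ 2 := by positivity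
  have hexp := exp_neg_sub_exp_neg_add_le hc hn
  rw [jumpKernel, jumpKernel, ← sub_div, div_le_iff₀ hξ2, inner_add_right, inner_add_right]
  rcases le_or_gt ‖ξ‖ 1 with h | h
  · rw [trunc_of_norm_le h]
    nlinarith [mul_nonneg (norm_nonneg n) hξ2.le]
  · rw [trunc_of_one_lt_norm h, inner_zero_left, inner_zero_left]
    nlinarith [real_inner_le_norm ξ n, norm_nonneg n,
      mul_nonneg (norm_nonneg n) (by nlinarith : (0 : ℝ) ≤ ‖ξ‖ ^ 2 - ‖ξ‖)]

end JumpKernel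

section Riccati

variable {H : Type*} [NormedAddCommGroup H] [InnerProductSpace ℝ H] [MeasurableSpace H]
  [BorelSpace H] {K : Set H}

theorem measurable_inner_trunc (u : H) : Measurable fun ξ : H => ⟪trunc ξ, u⟫ := by
  have h : (fun ξ : H => ⟪trunc ξ, u⟫) = fun ξ => if ‖ξ‖ ≤ 1 then ⟪ξ, u⟫ else 0 := by
    funext ξ
    unfold trunc
    split_ifs <;> simp
  rw [h]
  exact Measurable.ite (measurableSet_le measurable_norm measurable_const)
    (continuous_id.inner continuous_const).measurable measurable_const

theorem measurable_jumpKernel (u : H) : Measurable (jumpKernel u) :=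
  (((Real.continuous_exp.comp (continuous_id.inner continuous_const).neg).measurable.sub
    measurable_const).add (measurable_inner_trunc u)).div (measurable_norm.pow_const 2)

theorem IsSelfDualCone.measurableSet_diff_zero (hK : IsSelfDualCone K) :
    MeasurableSet (K \ {0}) :=
  hK.isClosed.measurableSet.diff (measurableSet_singleton 0)

variable [CompleteSpace H]

namespace AdmissibleParams

variable (p : AdmissibleParams H K)

def growthConst : ℝ := ‖p.B‖ + ‖p.muVec (K \ {0})‖

theorem integrableOn_jumpKernel (hK : IsSelfDualCone K) {u x : H} (hu : u ∈ K) (hx : x ∈ K) :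
    IntegrableOn (jumpKernel u) (K \ {0}) (p.ν x) := by
  have := p.ν_finite x hx
  refine Integrable.mono' (integrable_const (1 + ‖u‖ ^ 2))
    (measurable_jumpKernel u).aestronglyMeasurable ?_
  filter_upwards [ae_restrict_mem hK.measurableSet_diff_zero] with ξ hξ
  exact abs_jumpKernel_le (hK.inner_nonneg hξ.1 hu)

theorem measureReal_ν_le (hK : IsSelfDualCone K) {x : H} (hx : x ∈ K) :
    (p.ν x).real (K \ {0}) ≤ ‖p.muVec (K \ {0})‖ * ‖x‖ := by
  rw [measureReal_def, ← p.muVec_spec _ hK.measurableSet_diff_zero x hx]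
  exact real_inner_le_norm _ _

end AdmissibleParams

def IsRiccatiOperator (p : AdmissibleParams H K) (R : H → H) : Prop :=
  ∀ u ∈ K, ∀ x ∈ K, ⟪R u, x⟫ =
    ⟪ContinuousLinearMap.adjoint p.B u, x⟫ - ∫ ξ in K \ {0}, jumpKernel u ξ ∂(p.ν x)

namespace IsRiccatiOperator

variable {p : AdmissibleParams H K} {R : H → H}

theorem inner_sub (hK : IsSelfDualCone K) (hR : IsRiccatiOperator p R) {c d n : H}
    (hc : c ∈ K) (hd : d ∈ K) (hn : n ∈ K) :
    ⟪R c - R d, n⟫ =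
      ⟪c - d, p.B n⟫ - ∫ ξ in K \ {0}, (jumpKernel c ξ - jumpKernel d ξ) ∂(p.ν n) := by
  rw [integral_sub (p.integrableOn_jumpKernel hK hc hn) (p.integrableOn_jumpKernel hK hd hn),
    inner_sub_left, hR c hc n hn, hR d hd n hn, ContinuousLinearMap.adjoint_inner_left,
    ContinuousLinearMap.adjoint_inner_left, inner_sub_left]
  ring

theorem inner_sub_nonneg (hK : IsSelfDualCone K) (hR : IsRiccatiOperator p R) {c d n : H}
    (hc : c ∈ K) (hd : d ∈ K) (hn : n ∈ K) (hcd : c - d ∈ K) (horth : ⟪c - d, n⟫ = 0) :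
    0 ≤ ⟪R c - R d, n⟫ := by
  have hjump : ∫ ξ in K \ {0}, (jumpKernel c ξ - jumpKernel d ξ) ∂(p.ν n)
      ≤ ∫ ξ in K \ {0}, ⟪trunc ξ, c - d⟫ / ‖ξ‖ ^ 2 ∂(p.ν n) := by
    refine setIntegral_mono_on ((p.integrableOn_jumpKernel hK hc hn).sub
      (p.integrableOn_jumpKernel hK hd hn)) (p.ν_int (c - d) hcd n hn horth)
      hK.measurableSet_diff_zero fun ξ hξ => jumpKernel_sub_le ?_
    have := hK.inner_nonneg hξ.1 hcd
    rwa [inner_sub_right, sub_nonneg] at this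
  have hB := p.B_quasi (c - d) hcd n hn horth
  rw [ContinuousLinearMap.adjoint_inner_left] at hB
  rw [hR.inner_sub hK hc hd hn]
  linarith

theorem neg_le_inner_sub_add (hK : IsSelfDualCone K) (hR : IsRiccatiOperator p R) {c n : H}
    (hc : c ∈ K) (hn : n ∈ K) :
    -(p.growthConst * ‖n‖ ^ 2) ≤ ⟪R c - R (c + n), n⟫ := by
  have := p.ν_finite n hn
  have hB : -(‖p.B‖ * ‖n‖ ^ 2) ≤ ⟪c - (c + n), p.B n⟫ := by
    rw [sub_add_cancel_left, inner_neg_left, neg_le_neg_iff]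
    nlinarith [real_inner_le_norm n (p.B n), p.B.le_opNorm n, norm_nonneg n]
  have hjump : ∫ ξ in K \ {0}, (jumpKernel c ξ - jumpKernel (c + n) ξ) ∂(p.ν n)
      ≤ ‖n‖ * (p.ν n).real (K \ {0}) := by
    have := setIntegral_mono_on ((p.integrableOn_jumpKernel hK hc hn).sub
      (p.integrableOn_jumpKernel hK (hK.add_mem hc hn) hn)) (integrable_const ‖n‖)
      hK.measurableSet_diff_zero fun ξ hξ => jumpKernel_sub_jumpKernel_add_le
        (hK.inner_nonneg hξ.1 hc) (hK.inner_nonneg hξ.1 hn)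
    rwa [setIntegral_const, smul_eq_mul, mul_comm] at this
  rw [hR.inner_sub hK hc (hK.add_mem hc hn) hn, AdmissibleParams.growthConst]
  nlinarith [p.measureReal_ν_le hK hn, norm_nonneg n]

theorem inner_self_le (hK : IsSelfDualCone K) (hR : IsRiccatiOperator p R) {u : H}
    (hu : u ∈ K) : ⟪R u, u⟫ ≤ p.growthConst * ‖u‖ ^ 2 := by
  have := p.ν_finite u hu
  have hB : ⟪u, p.B u⟫ ≤ ‖p.B‖ * ‖u‖ ^ 2 := by
    nlinarith [real_inner_le_norm u (p.B u), p.B.le_opNorm u, norm_nonneg u]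
  have hjump : -‖u‖ * (p.ν u).real (K \ {0}) ≤ ∫ ξ in K \ {0}, jumpKernel u ξ ∂(p.ν u) := by
    have := setIntegral_mono_on (integrable_const (-‖u‖)) (p.integrableOn_jumpKernel hK hu hu)
      hK.measurableSet_diff_zero fun ξ _ => neg_norm_le_jumpKernel u ξ
    rwa [setIntegral_const, smul_eq_mul, mul_comm] at this
  rw [hR u hu u hu, ContinuousLinearMap.adjoint_inner_left, AdmissibleParams.growthConst]
  nlinarith [p.measureReal_ν_le hK hu, norm_nonneg u]

end IsRiccatiOperator

end Riccati

theorem le_mul_exp_of_touching_hasDerivWithinAt {f : ℝ → ℝ} {C T : ℝ} (hT : 0 ≤ T)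
    (hf : ContinuousOn f (Set.Icc 0 T))
    (htouch : ∀ s ∈ Set.Ico 0 T, ∃ g : ℝ → ℝ, ∃ D : ℝ, (∀ z, f z ≤ g z) ∧ g s = f s ∧
      HasDerivWithinAt g D (Set.Ioi s) s ∧ D ≤ C * f s) :
    f T ≤ f 0 * Real.exp (C * T) := by
  have hslope : ∀ s ∈ Set.Ico 0 T, ∀ r, C * f s < r →
      ∃ᶠ z in 𝓝[>] s, (z - s)⁻¹ * (f z - f s) < r := by
    intro s hs r hr
    obtain ⟨g, D, hfg, hgs, hg, hD⟩ := htouch s hs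
    have hev : ∀ᶠ z in 𝓝[>] s, slope g s z < r :=
      ((hasDerivWithinAt_iff_tendsto_slope' Set.self_notMem_Ioi).1 hg).eventually_lt_const
        (hD.trans_lt hr)
    refine (hev.and self_mem_nhdsWithin).frequently.mono fun z ⟨hz, hsz⟩ => ?_
    rw [slope_def_field, div_eq_inv_mul] at hz
    have : f z - f s ≤ g z - g s := by linarith [hfg z]
    exact (mul_le_mul_of_nonneg_left this (inv_nonneg.2 (sub_nonneg.2 hsz.le))).trans_lt hz
  simpa [gronwallBound_ε0] using le_gronwallBound_of_liminf_deriv_right_le hf hslope le_rfl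
    (fun s _ => (add_zero _).ge) T (Set.right_mem_Icc.2 hT)

namespace IsRiccatiOperator

variable {H : Type*} [NormedAddCommGroup H] [InnerProductSpace ℝ H] [CompleteSpace H]
  [MeasurableSpace H] [BorelSpace H] {K : Set H} {p : AdmissibleParams H K} {R : H → H}

theorem neg_le_inner_sub_of_orthogonal (hK : IsSelfDualCone K) (hR : IsRiccatiOperator p R)
    {a b z : H} (ha : a ∈ K) (hb : b ∈ K) (hz : z ∈ K) (hzn : z - (b - a) ∈ K)
    (horth : ⟪z, z - (b - a)⟫ = 0) :
    -(p.growthConst * ‖z - (b - a)‖ ^ 2) ≤ ⟪R b - R a, z - (b - a)⟫ := by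
  have hbn : b + (z - (b - a)) = a + z := by abel
  have hlip := hR.neg_le_inner_sub_add hK hb hzn
  have hquasi := hR.inner_sub_nonneg hK (hK.add_mem ha hz) ha hzn (by rwa [add_sub_cancel_left])
    (by rwa [add_sub_cancel_left])
  rw [hbn] at hlip
  have : R b - R a = (R b - R (a + z)) + (R (a + z) - R a) := by abel
  rw [this, inner_add_left]
  linarith

theorem sub_mem_of_hasDerivWithinAt (hK : IsSelfDualCone K) (hR : IsRiccatiOperator p R)
    {x y : ℝ → H} (hxK : ∀ t, 0 ≤ t → x t ∈ K)
    (hx : ∀ t, 0 ≤ t → HasDerivWithinAt x (R (x t)) (Set.Ici 0) t)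
    (hyK : ∀ t, 0 ≤ t → y t ∈ K)
    (hy : ∀ t, 0 ≤ t → HasDerivWithinAt y (R (y t)) (Set.Ici 0) t)
    (h0 : y 0 - x 0 ∈ K) {T : ℝ} (hT : 0 ≤ T) : y T - x T ∈ K := by
  set w : ℝ → H := fun s => y s - x s
  have hw : ∀ s, 0 ≤ s → HasDerivWithinAt w (R (y s) - R (x s)) (Set.Ici 0) s :=
    fun s hs => (hy s hs).sub (hx s hs)
  choose P hPK hPw horth hdist using fun s => hK.exists_moreau_decomposition (w s)
  have hwC : ContinuousOn w (Set.Icc 0 T) := fun s hs =>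
    (hw s hs.1).continuousWithinAt.mono Set.Icc_subset_Ici_self
  have hgron : Metric.infDist (w T) K ^ 2
      ≤ Metric.infDist (w 0) K ^ 2 * Real.exp (2 * p.growthConst * T) := by
    refine le_mul_exp_of_touching_hasDerivWithinAt (f := fun s => Metric.infDist (w s) K ^ 2) hT
      (((Metric.continuous_infDist_pt K).comp_continuousOn hwC).pow 2)
      fun s hs => ⟨fun z => ‖w z - P s‖ ^ 2, _, fun z => ?_, by simp only [hdist],
        (((hw s hs.1).sub_const (P s)).norm_sq).mono
          fun z hz => hs.1.trans (le_of_lt hz), ?_⟩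
    · have := Metric.infDist_le_dist_of_mem (x := w z) (hPK s)
      rw [dist_eq_norm] at this
      exact pow_le_pow_left₀ Metric.infDist_nonneg this 2
    · have := hR.neg_le_inner_sub_of_orthogonal hK (hxK s hs.1) (hyK s hs.1) (hPK s) (hPw s)
        (horth s)
      rw [hdist s, ← neg_sub, inner_neg_left, norm_neg, real_inner_comm]
      linarith
  rw [show w 0 = y 0 - x 0 from rfl, Metric.infDist_zero_of_mem h0] at hgron
  have hT0 : Metric.infDist (w T) K = 0 := by
    nlinarith [Metric.infDist_nonneg (x := w T) (s := K)]
  exact (hK.isClosed.mem_iff_infDist_zero ⟨0, hK.zero_mem⟩).2 hT0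

theorem norm_le_exp_mul (hK : IsSelfDualCone K) (hR : IsRiccatiOperator p R) {x : ℝ → H}
    (hxK : ∀ t, 0 ≤ t → x t ∈ K) (hx : ∀ t, 0 ≤ t → HasDerivWithinAt x (R (x t)) (Set.Ici 0) t)
    {T : ℝ} (hT : 0 ≤ T) : ‖x T‖ ≤ Real.exp (p.growthConst * T) * ‖x 0‖ := by
  have hgron : ‖x T‖ ^ 2 ≤ ‖x 0‖ ^ 2 * Real.exp (2 * p.growthConst * T) := by
    have hxC : ContinuousOn x (Set.Icc 0 T) := fun s hs =>
      (hx s hs.1).continuousWithinAt.mono Set.Icc_subset_Ici_self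
    refine le_mul_exp_of_touching_hasDerivWithinAt (f := fun s => ‖x s‖ ^ 2) hT
      (hxC.norm.pow 2)
      fun s hs => ⟨fun z => ‖x z‖ ^ 2, _, fun z => le_rfl, rfl,
        ((hx s hs.1).norm_sq).mono fun z hz => hs.1.trans (le_of_lt hz), ?_⟩
    rw [real_inner_comm]
    linarith [hR.inner_self_le hK (hxK s hs.1)]
  have hexp : Real.exp (2 * p.growthConst * T) = Real.exp (p.growthConst * T) ^ 2 := by
    rw [← Real.exp_nat_mul]
    ring_nf
  rw [hexp, ← mul_pow, mul_comm] at hgron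
  exact (pow_le_pow_iff_left₀ (norm_nonneg _) (by positivity) two_ne_zero).1 hgron

end IsRiccatiOperator

theorem stmt_9_general {H : Type*} [NormedAddCommGroup H] [InnerProductSpace ℝ H] [CompleteSpace H]
    [MeasurableSpace H] [BorelSpace H] (K : Set H)
    (hK : IsSelfDualCone K)
    (p : AdmissibleParams H K)
    (R : H → H)
    (hR : ∀ u ∈ K, ∀ x ∈ K, ⟪R u, x⟫ =
      ⟪ContinuousLinearMap.adjoint p.B u, x⟫
        - ∫ ξ in K \ {0}, (Real.exp (-⟪ξ, u⟫) - 1 + ⟪trunc ξ, u⟫) / ‖ξ‖ ^ 2 ∂(p.ν x))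
    (ψ : ℝ → H → H)
    (hψ : ∀ u ∈ K, ψ 0 u = u ∧ (∀ t, 0 ≤ t → ψ t u ∈ K) ∧
      (∀ t, 0 ≤ t → HasDerivWithinAt (fun s => ψ s u) (R (ψ t u)) (Set.Ici 0) t)) :
    -- (a) monotonicity
    (∀ u ∈ K, ∀ v ∈ K, v - u ∈ K → ∀ t, 0 ≤ t → ψ t v - ψ t u ∈ K) ∧
    -- (b) exponential growth bound
    (∀ t, 0 ≤ t → ∀ u ∈ K,
      ‖ψ t u‖ ≤ Real.exp ((‖p.B‖ + 2 * ‖p.muVec (K \ {0})‖) * t) * ‖u‖) := by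
  have hRic : IsRiccatiOperator p R := hR
  refine ⟨fun u hu v hv hvu t ht => ?_, fun t ht u hu => ?_⟩
  · obtain ⟨hu0, huK, hu'⟩ := hψ u hu
    obtain ⟨hv0, hvK, hv'⟩ := hψ v hv
    exact hRic.sub_mem_of_hasDerivWithinAt hK huK hu' hvK hv' (by rwa [hu0, hv0]) ht
  · obtain ⟨hu0, huK, hu'⟩ := hψ u hu
    calc ‖ψ t u‖ ≤ Real.exp (p.growthConst * t) * ‖ψ 0 u‖ :=
          hRic.norm_le_exp_mul hK huK hu' ht
      _ ≤ Real.exp ((‖p.B‖ + 2 * ‖p.muVec (K \ {0})‖) * t) * ‖u‖ := by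
          rw [hu0, AdmissibleParams.growthConst]
          gcongr
          linarith [norm_nonneg (p.muVec (K \ {0}))]

/-- Monotonicity of `ψ(t,·)` with respect to the cone order and the
exponential growth bound `‖ψ(t,u)‖ ≤ e^{(‖B‖ + 2‖μ(K∖{0})‖)t}‖u‖`. -/
theorem stmt_9 {H : Type*} [NormedAddCommGroup H] [InnerProductSpace ℝ H] [CompleteSpace H]
    [MeasurableSpace H] [BorelSpace H] (K : Set H)
    (hK : IsSelfDualCone K) (hKgen : ∀ z : H, ∃ x ∈ K, ∃ y ∈ K, z = x - y)
    (hreg : IsRegularCone K)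
    (p : AdmissibleParams H K)
    (R : H → H)
    (hR : ∀ u ∈ K, ∀ x ∈ K, ⟪R u, x⟫ =
      ⟪ContinuousLinearMap.adjoint p.B u, x⟫
        - ∫ ξ in K \ {0}, (Real.exp (-⟪ξ, u⟫) - 1 + ⟪trunc ξ, u⟫) / ‖ξ‖ ^ 2 ∂(p.ν x))
    (ψ : ℝ → H → H)
    (hψ : ∀ u ∈ K, ψ 0 u = u ∧ (∀ t, 0 ≤ t → ψ t u ∈ K) ∧
      (∀ t, 0 ≤ t → HasDerivWithinAt (fun s => ψ s u) (R (ψ t u)) (Set.Ici 0) t))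
    (hψuniq : ∀ u ∈ K, ∀ g : ℝ → H, g 0 = u → (∀ t, 0 ≤ t → g t ∈ K) →
      (∀ t, 0 ≤ t → HasDerivWithinAt g (R (g t)) (Set.Ici 0) t) →
      ∀ t, 0 ≤ t → g t = ψ t u) :
    -- (a) monotonicity
    (∀ u ∈ K, ∀ v ∈ K, v - u ∈ K → ∀ t, 0 ≤ t → ψ t v - ψ t u ∈ K) ∧
    -- (b) exponential growth bound
    (∀ t, 0 ≤ t → ∀ u ∈ K,
      ‖ψ t u‖ ≤ Real.exp ((‖p.B‖ + 2 * ‖p.muVec (K \ {0})‖) * t) * ‖u‖) :=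
  stmt_9_general K hK p R hR ψ hψ
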